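/- arXiv:2301.11598 — 5 statements merged into one kernel-verified Lean document; each statement's English description precedes it below -/
import Mathlib

section
/- Let A ∈ ℝ^{m×n}, let Q ∈ ℝ^{m×k} have orthonormal columns (QᵀQ = I_k), let Ψ ∈ ℝ^{l×m}, and suppose Ψ Q has full column rank k. Define X = (Ψ Q)† (Ψ A), where † denotes the Moore–Penrose pseudoinverse. Then ‖A − Q X‖_F² = ‖A − Q Qᵀ A‖_F² + ‖X − Qᵀ A‖_F². -/
open Matrix BigOperators

noncomputable section

/-- Squared Frobenius norm of a matrix. -/
def frobSq {α β : Type*} [Fintype α] [Fintype β] (A : Matrix α β ℝ) : ℝ :=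
  ∑ i, ∑ j, (A i j) ^ 2

lemma frobSq_eq_trace {α β : Type*} [Fintype α] [Fintype β] (A : Matrix α β ℝ) :
    frobSq A = (Aᵀ * A).trace := by
  simp only [frobSq, Matrix.trace, Matrix.diag, Matrix.mul_apply, Matrix.transpose_apply]
  rw [Finset.sum_comm]
  congr 1; ext i; congr 1; ext j; ring

lemma frobSq_add_of_orth {α β : Type*} [Fintype α] [Fintype β] [DecidableEq β]
    (B C : Matrix α β ℝ) (h : Bᵀ * C = 0) :
    frobSq (B + C) = frobSq B + frobSq C := by
  have h' : Cᵀ * B = 0 := by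
    have := congrArg Matrix.transpose h
    simpa [Matrix.transpose_mul] using this
  simp [frobSq_eq_trace, Matrix.transpose_add, Matrix.add_mul, Matrix.mul_add,
    Matrix.trace_add, h, h']

lemma frobSq_mul_orth {m k β : Type*} [Fintype m] [Fintype k] [Fintype β] [DecidableEq k]
    (Q : Matrix m k ℝ) (hQ : Qᵀ * Q = 1) (M : Matrix k β ℝ) :
    frobSq (Q * M) = frobSq M := by
  rw [frobSq_eq_trace, frobSq_eq_trace, Matrix.transpose_mul, Matrix.mul_assoc,
    ← Matrix.mul_assoc Qᵀ Q M, hQ, Matrix.one_mul]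

lemma frobSq_neg {α β : Type*} [Fintype α] [Fintype β] (A : Matrix α β ℝ) :
    frobSq (-A) = frobSq A := by
  simp [frobSq]

/-- Error decomposition of the two-sided sketch (Lemma A.3 of Tropp et al.):
with `Q` having orthonormal columns, `Ψ Q` of full column rank `k`, and
`X = (Ψ Q)† (Ψ A)` (the Moore–Penrose pseudoinverse, which for a full
column-rank matrix `M` is `(Mᵀ M)⁻¹ Mᵀ`), one has
`‖A − Q X‖_F² = ‖A − Q Qᵀ A‖_F² + ‖X − Qᵀ A‖_F²`. -/
theorem sketch_error_decomposition (m n k l : ℕ)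
    (A : Matrix (Fin m) (Fin n) ℝ) (Q : Matrix (Fin m) (Fin k) ℝ)
    (Ψ : Matrix (Fin l) (Fin m) ℝ)
    (hQ : Qᵀ * Q = 1) (hrank : (Ψ * Q).rank = k)
    (X : Matrix (Fin k) (Fin n) ℝ)
    (hX : X = ((Ψ * Q)ᵀ * (Ψ * Q))⁻¹ * (Ψ * Q)ᵀ * (Ψ * A)) :
    frobSq (A - Q * X) = frobSq (A - Q * Qᵀ * A) + frobSq (X - Qᵀ * A) := by
  have hdecomp : A - Q * X = (A - Q * Qᵀ * A) + Q * (Qᵀ * A - X) := by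
    rw [Matrix.mul_sub]
    abel_nf
    rw [Matrix.mul_assoc]
    abel
  have horth : (A - Q * Qᵀ * A)ᵀ * (Q * (Qᵀ * A - X)) = 0 := by
    have hQ0 : (A - Q * Qᵀ * A)ᵀ * Q = 0 := by
      rw [Matrix.transpose_sub, Matrix.sub_mul, Matrix.transpose_mul, Matrix.transpose_mul,
        Matrix.mul_assoc, Matrix.mul_assoc, hQ, Matrix.mul_one]
      simp [Matrix.mul_assoc]
    rw [← Matrix.mul_assoc, hQ0, Matrix.zero_mul]
  rw [hdecomp, frobSq_add_of_orth _ _ horth, frobSq_mul_orth Q hQ]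
  congr 1
  rw [show X - Qᵀ * A = -(Qᵀ * A - X) by abel, frobSq_neg]
end
end

section
/- Let X be an N-th order tensor and, for each n = 1,…,N, let P_n = U^{(n)} U^{(n)ᵀ} be an orthogonal projection (U^{(n)} having orthonormal columns). Define the approximation X̂ = X ×₁ P₁ ×₂ P₂ ⋯ ×_N P_N. Then ‖X − X̂‖_F² ≤ Σ_{n=1}^N ‖X ×_n (I − P_n)‖_F². -/
open Matrix BigOperators

noncomputable section

/-- Squared Frobenius norm of a tensor (a real-valued function on a finite index
type). -/
def frobSqT {ι : Type*} [Fintype ι] (X : ι → ℝ) : ℝ := ∑ i, X i ^ 2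

/-- The multilinear (Tucker) transform of an `N`-th order tensor: applying the
matrix `A n` along mode `n` for every `n`.  For square matrices this realizes
`X ×₁ A 1 ×₂ A 2 ⋯ ×_N A N`. -/
def multiT {N : ℕ} {I : Fin N → ℕ}
    (A : ∀ n, Matrix (Fin (I n)) (Fin (I n)) ℝ)
    (X : (∀ n, Fin (I n)) → ℝ) : (∀ n, Fin (I n)) → ℝ :=
  fun j => ∑ i : ∀ n, Fin (I n), (∏ n, A n (j n) (i n)) * X i

/-- The family of matrices that is `M` in mode `n` and the identity elsewhere,
so that `multiT (singleMode n M) X = X ×_n M`. -/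
def singleMode {N : ℕ} {I : Fin N → ℕ} (n : Fin N)
    (M : Matrix (Fin (I n)) (Fin (I n)) ℝ) :
    ∀ m, Matrix (Fin (I m)) (Fin (I m)) ℝ :=
  fun m => if h : m = n then
    cast (show Matrix (Fin (I n)) (Fin (I n)) ℝ = Matrix (Fin (I m)) (Fin (I m)) ℝ
      by rw [h]) M
  else 1

namespace Thosvd

variable {N : ℕ} {I : Fin N → ℕ}

def ip (X Y : (∀ n, Fin (I n)) → ℝ) : ℝ := ∑ i, X i * Y i

lemma frobSqT_eq_ip (X : (∀ n, Fin (I n)) → ℝ) : frobSqT X = ip X X := by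
  simp [frobSqT, ip, sq]

lemma ip_comm (X Y : (∀ n, Fin (I n)) → ℝ) : ip X Y = ip Y X := by
  simp [ip, mul_comm]

lemma frobSqT_nonneg (X : (∀ n, Fin (I n)) → ℝ) : 0 ≤ frobSqT X :=
  Finset.sum_nonneg fun _ _ => sq_nonneg _

lemma singleMode_same (n : Fin N) (M : Matrix (Fin (I n)) (Fin (I n)) ℝ) :
    singleMode n M n = M := by simp [singleMode]

lemma singleMode_ne {m n : Fin N} (h : m ≠ n) (M : Matrix (Fin (I n)) (Fin (I n)) ℝ) :
    singleMode n M m = 1 := dif_neg h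

lemma multiT_comp (A B : ∀ n, Matrix (Fin (I n)) (Fin (I n)) ℝ)
    (X : (∀ n, Fin (I n)) → ℝ) :
    multiT A (multiT B X) = multiT (fun m => A m * B m) X := by
  funext j
  unfold multiT
  simp only [Finset.mul_sum, Matrix.mul_apply]
  rw [Finset.sum_comm]
  refine Finset.sum_congr rfl fun k _ => ?_
  rw [Finset.prod_univ_sum, Finset.sum_mul]
  rw [Fintype.piFinset_univ]
  refine Finset.sum_congr rfl fun i _ => ?_
  rw [Finset.prod_mul_distrib]
  ring

lemma ip_multiT_left (A : ∀ n, Matrix (Fin (I n)) (Fin (I n)) ℝ)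
    (X Y : (∀ n, Fin (I n)) → ℝ) :
    ip (multiT A X) Y = ip X (multiT (fun m => (A m)ᵀ) Y) := by
  unfold ip multiT
  simp only [Finset.sum_mul, Finset.mul_sum, Matrix.transpose_apply]
  rw [Finset.sum_comm]
  refine Finset.sum_congr rfl fun i _ => Finset.sum_congr rfl fun j _ => ?_
  ring

lemma multiT_zero_slot (A : ∀ n, Matrix (Fin (I n)) (Fin (I n)) ℝ)
    (n : Fin N) (h : A n = 0) (X : (∀ n, Fin (I n)) → ℝ) :
    multiT A X = 0 := by
  funext j
  unfold multiT
  refine Finset.sum_eq_zero fun i _ => ?_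
  rw [Finset.prod_eq_zero (Finset.mem_univ n) (by rw [h]; rfl), zero_mul]

lemma multiT_one (X : (∀ n, Fin (I n)) → ℝ) :
    multiT (fun _ => (1 : Matrix _ _ ℝ)) X = X := by
  funext j
  unfold multiT
  rw [Finset.sum_eq_single j]
  · simp [Matrix.one_apply]
  · intro i _ hne
    have : ∃ n, j n ≠ i n := by
      by_contra h
      push_neg at h
      exact hne ((funext h : j = i).symm)
    obtain ⟨n, hn⟩ := this
    rw [Finset.prod_eq_zero (Finset.mem_univ n) (by simp [Matrix.one_apply, hn]), zero_mul]
  · simp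

lemma multiT_update_sub (A : ∀ n, Matrix (Fin (I n)) (Fin (I n)) ℝ) (n : Fin N)
    (M M' : Matrix (Fin (I n)) (Fin (I n)) ℝ) (X : (∀ n, Fin (I n)) → ℝ) :
    multiT (Function.update A n M) X - multiT (Function.update A n M') X
      = multiT (Function.update A n (M - M')) X := by
  funext j
  have key : ∀ (B : Matrix (Fin (I n)) (Fin (I n)) ℝ) (i : ∀ m, Fin (I m)),
      (∏ m, (Function.update A n B) m (j m) (i m))
        = B (j n) (i n) * ∏ m ∈ Finset.univ.erase n, A m (j m) (i m) := by
    intro B i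
    rw [← Finset.mul_prod_erase Finset.univ _ (Finset.mem_univ n)]
    congr 1
    · simp
    · refine Finset.prod_congr rfl fun m hm => ?_
      rw [Function.update_of_ne (Finset.ne_of_mem_erase hm)]
  simp only [Pi.sub_apply]
  unfold multiT
  rw [← Finset.sum_sub_distrib]
  refine Finset.sum_congr rfl fun i _ => ?_
  rw [key M i, key M' i, key (M - M') i, Matrix.sub_apply]
  ring

lemma ip_sum_left {α : Type*} (s : Finset α) (Y : α → (∀ n, Fin (I n)) → ℝ)
    (Z : (∀ n, Fin (I n)) → ℝ) :
    ip (∑ n ∈ s, Y n) Z = ∑ n ∈ s, ip (Y n) Z := by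
  unfold ip
  simp only [Finset.sum_apply, Finset.sum_mul]
  exact Finset.sum_comm

lemma ip_zero_right (X : (∀ n, Fin (I n)) → ℝ) : ip X 0 = 0 := by simp [ip]

lemma contraction (A : ∀ n, Matrix (Fin (I n)) (Fin (I n)) ℝ)
    (h : ∀ m, (A m)ᵀ * A m = A m) (Y : (∀ n, Fin (I n)) → ℝ) :
    frobSqT (multiT A Y) ≤ frobSqT Y := by
  have key : frobSqT (multiT A Y) = ip Y (multiT A Y) := by
    rw [frobSqT_eq_ip, ip_multiT_left, multiT_comp]
    simp only [h]
  have cs : (ip Y (multiT A Y)) ^ 2 ≤ frobSqT Y * frobSqT (multiT A Y) := by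
    simpa [ip, frobSqT] using
      Finset.sum_mul_sq_le_sq_mul_sq Finset.univ Y (multiT A Y)
  have ha := frobSqT_nonneg (multiT A Y)
  have hb := frobSqT_nonneg Y
  nlinarith [key, cs, ha, hb]

end Thosvd

open Thosvd

/-- Quasi-optimality inequality underlying the THOSVD error bound: for orthogonal
projections `P n = U n (U n)ᵀ` and `X̂ = X ×₁ P₁ ⋯ ×_N P_N`,
`‖X − X̂‖_F² ≤ ∑_n ‖X ×_n (I − P_n)‖_F²`. -/
theorem thosvd_quasi_optimality {N : ℕ} (I r : Fin N → ℕ)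
    (X : (∀ n, Fin (I n)) → ℝ)
    (U : ∀ n, Matrix (Fin (I n)) (Fin (r n)) ℝ)
    (hU : ∀ n, (U n)ᵀ * U n = 1) :
    frobSqT (X - multiT (fun n => U n * (U n)ᵀ) X) ≤
      ∑ n, frobSqT (multiT (singleMode n (1 - U n * (U n)ᵀ)) X) := by
  classical
  set P : ∀ n, Matrix (Fin (I n)) (Fin (I n)) ℝ := fun n => U n * (U n)ᵀ with hPdef
  have hPsymm : ∀ n, (P n)ᵀ = P n := by
    intro n; simp [hPdef, Matrix.transpose_mul]
  have hPproj : ∀ n, P n * P n = P n := by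
    intro n
    show U n * (U n)ᵀ * (U n * (U n)ᵀ) = U n * (U n)ᵀ
    rw [Matrix.mul_assoc, ← Matrix.mul_assoc (U n)ᵀ, hU n, Matrix.one_mul]
  have hPP : ∀ n, (P n)ᵀ * P n = P n := fun n => by rw [hPsymm, hPproj]
  -- the telescoping families
  set F : ℕ → ∀ m, Matrix (Fin (I m)) (Fin (I m)) ℝ :=
    fun k m => if (m : ℕ) < k then P m else 1 with hFdef
  set G : ℕ → (∀ n, Fin (I n)) → ℝ := fun k => multiT (F k) X with hGdef
  set D : Fin N → ∀ m, Matrix (Fin (I m)) (Fin (I m)) ℝ :=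
    fun n => Function.update (F n) n (1 - P n) with hDdef
  set Y : Fin N → (∀ n, Fin (I n)) → ℝ := fun n => multiT (D n) X with hYdef
  have hFkk : ∀ n : Fin N, F n n = 1 := by
    intro n; simp [hFdef]
  have hstep : ∀ n : Fin N, G (n : ℕ) - G ((n : ℕ) + 1) = Y n := by
    intro n
    have h1 : F (n : ℕ) = Function.update (F (n : ℕ)) n (1 : Matrix _ _ ℝ) := by
      rw [← hFkk n, Function.update_eq_self]
    have h2 : F ((n : ℕ) + 1) = Function.update (F (n : ℕ)) n (P n) := by
      funext m
      rcases eq_or_ne m n with rfl | hmn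
      · simp [hFdef]
      · rw [Function.update_of_ne hmn]
        have : (m : ℕ) < (n : ℕ) + 1 ↔ (m : ℕ) < (n : ℕ) := by
          constructor
          · intro h
            exact lt_of_le_of_ne (Nat.lt_succ_iff.mp h) (fun hv => hmn (Fin.val_injective hv))
          · exact fun h => Nat.lt_succ_of_lt h
        simp only [hFdef, this]
    show multiT (F (n:ℕ)) X - multiT (F ((n:ℕ)+1)) X = multiT (D n) X
    rw [h1, h2, multiT_update_sub]
  have hG0 : G 0 = X := by
    show multiT (F 0) X = X
    have h : F 0 = fun m => (1 : Matrix (Fin (I m)) (Fin (I m)) ℝ) := by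
      funext m; simp [hFdef]
    rw [h]; exact multiT_one X
  have hGN : G N = multiT P X := by
    show multiT (F N) X = multiT P X
    have h : F N = P := by
      funext m; simp [hFdef, m.isLt]
    rw [h]
  have htel : X - multiT P X = ∑ n, Y n := by
    have : ∑ n : Fin N, Y n = ∑ n : Fin N, (G (n:ℕ) - G ((n:ℕ)+1)) := by
      exact Finset.sum_congr rfl fun n _ => (hstep n).symm
    rw [this, Fin.sum_univ_eq_sum_range (fun k => G k - G (k + 1)) N,
      Finset.sum_range_sub' G N, hG0, hGN]
  -- cross terms vanish
  have hDk_at : ∀ (n k : Fin N), (n : ℕ) < (k : ℕ) → D k n = P n := by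
    intro n k hlt
    have hnk : n ≠ k := fun h => absurd (congrArg Fin.val h) (Nat.ne_of_lt hlt)
    rw [hDdef]
    simp only [Function.update_of_ne hnk, hFdef, if_pos hlt]
  have hDn_at : ∀ n : Fin N, D n n = 1 - P n := by
    intro n; simp [hDdef]
  have hcross0 : ∀ (n k : Fin N), (n : ℕ) < (k : ℕ) → ip (Y n) (Y k) = 0 := by
    intro n k hlt
    rw [hYdef]
    show ip (multiT (D n) X) (multiT (D k) X) = 0
    rw [ip_multiT_left, multiT_comp]
    rw [multiT_zero_slot (fun m => (D n m)ᵀ * D k m) n ?_, ip_zero_right]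
    show (D n n)ᵀ * D k n = 0
    rw [hDn_at n, hDk_at n k hlt, Matrix.transpose_sub, Matrix.transpose_one, hPsymm,
      Matrix.sub_mul, Matrix.one_mul, hPproj, sub_self]
  have hcross : ∀ (n k : Fin N), n ≠ k → ip (Y n) (Y k) = 0 := by
    intro n k hnk
    rcases lt_or_gt_of_ne (fun h : (n:ℕ) = (k:ℕ) => hnk (Fin.val_injective h)) with h | h
    · exact hcross0 n k h
    · rw [ip_comm]; exact hcross0 k n h
  -- diagonal bound
  have hdiag : ∀ n : Fin N, frobSqT (Y n) ≤ frobSqT (multiT (singleMode n (1 - P n)) X) := by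
    intro n
    have hfac : (fun m => F (n:ℕ) m * singleMode n (1 - P n) m) = D n := by
      funext m
      rcases eq_or_ne m n with rfl | hmn
      · rw [singleMode_same, hFkk, hDn_at, Matrix.one_mul]
      · rw [singleMode_ne hmn, Matrix.mul_one, hDdef]
        simp only [Function.update_of_ne hmn]
    have hYeq : Y n = multiT (F (n:ℕ)) (multiT (singleMode n (1 - P n)) X) := by
      rw [multiT_comp, hfac, hYdef]
    rw [hYeq]
    refine contraction _ ?_ _
    intro m
    rw [hFdef]
    by_cases hm : (m : ℕ) < (n : ℕ)
    · simp only [if_pos hm]; exact hPP m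
    · simp only [if_neg hm, Matrix.transpose_one, Matrix.one_mul]
  -- assemble
  calc frobSqT (X - multiT P X) = frobSqT (∑ n, Y n) := by rw [htel]
    _ = ∑ n, ∑ k, ip (Y n) (Y k) := by
        rw [frobSqT_eq_ip, ip_sum_left]
        refine Finset.sum_congr rfl fun n _ => ?_
        rw [ip_comm, ip_sum_left]
        exact Finset.sum_congr rfl fun k _ => ip_comm _ _
    _ = ∑ n, frobSqT (Y n) := by
        refine Finset.sum_congr rfl fun n _ => ?_
        rw [Finset.sum_eq_single n (fun k _ hk => hcross n k (Ne.symm hk)) (by simp),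
          frobSqT_eq_ip]
    _ ≤ ∑ n, frobSqT (multiT (singleMode n (1 - P n)) X) :=
        Finset.sum_le_sum fun n _ => hdiag n
end
end

section
/- Let X be an N-th order tensor, and for n = 0,1,…,N define the partial projections X̂^{(n)} = X ×₁ P₁ ⋯ ×_n P_n where each P_j = U^{(j)} U^{(j)ᵀ} is an orthogonal projection, with X̂^{(0)} = X. Then the telescoping error decomposition ‖X − X̂^{(N)}‖_F² = Σ_{n=1}^N ‖X̂^{(n−1)} − X̂^{(n)}‖_F² holds. -/
open Matrix BigOperators Finset

noncomputable section

/-- Partial projection `X̂⁽ᵐ⁾ = X ×₁ P 1 ⋯ ×_m P m` (projecting the first `m`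
modes; `partialProj P X 0 = X`). -/
def partialProj {N : ℕ} {I : Fin N → ℕ}
    (P : ∀ n, Matrix (Fin (I n)) (Fin (I n)) ℝ)
    (X : (∀ n, Fin (I n)) → ℝ) (m : ℕ) : (∀ n, Fin (I n)) → ℝ :=
  multiT (fun n => if (n : ℕ) < m then P n else 1) X

namespace SthosvdAux

variable {N : ℕ} {I : Fin N → ℕ}

/-- Frobenius inner product of tensors. -/
def innerT (A B : (∀ n, Fin (I n)) → ℝ) : ℝ := ∑ i, A i * B i

lemma frobSq_eq_inner (X : (∀ n, Fin (I n)) → ℝ) : frobSqT X = innerT X X := by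
  simp [frobSqT, innerT, sq]

lemma innerT_sub_left (A B C : (∀ n, Fin (I n)) → ℝ) :
    innerT (A - B) C = innerT A C - innerT B C := by
  simp [innerT, sub_mul, Finset.sum_sub_distrib]

lemma innerT_sub_right (A B C : (∀ n, Fin (I n)) → ℝ) :
    innerT A (B - C) = innerT A B - innerT A C := by
  simp [innerT, mul_sub, Finset.sum_sub_distrib]

lemma multiT_one (X : (∀ n, Fin (I n)) → ℝ) :
    multiT (fun _ => (1 : Matrix _ _ ℝ)) X = X := by
  funext j
  rw [multiT, Fintype.sum_eq_single j]
  · simp [Matrix.one_apply]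
  · intro i hi
    obtain ⟨n, hn⟩ : ∃ n, j n ≠ i n := by
      by_contra h
      push_neg at h
      exact hi (funext fun n => (h n).symm)
    have : (∏ n, (1 : Matrix (Fin (I n)) (Fin (I n)) ℝ) (j n) (i n)) = 0 :=
      Finset.prod_eq_zero (Finset.mem_univ n) (by simp [Matrix.one_apply, hn])
    simp [this]

lemma multiT_mul (A B : ∀ n, Matrix (Fin (I n)) (Fin (I n)) ℝ)
    (X : (∀ n, Fin (I n)) → ℝ) :
    multiT (fun n => A n * B n) X = multiT A (multiT B X) := by
  funext j
  simp only [multiT, Finset.mul_sum]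
  rw [Finset.sum_comm]
  refine Finset.sum_congr rfl fun k _ => ?_
  have h1 : (∏ n, (A n * B n) (j n) (k n)) =
      ∑ i : ∀ n, Fin (I n), ∏ n, A n (j n) (i n) * B n (i n) (k n) := by
    have := Finset.prod_univ_sum (fun n : Fin N => (Finset.univ : Finset (Fin (I n))))
      (fun n m => A n (j n) m * B n m (k n))
    simp only [Fintype.piFinset_univ] at this
    rw [← this]
    refine Finset.prod_congr rfl fun n _ => ?_
    simp [Matrix.mul_apply]
  rw [h1, Finset.sum_mul]
  refine Finset.sum_congr rfl fun i _ => ?_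
  rw [Finset.prod_mul_distrib]
  ring

lemma innerT_multiT (A : ∀ n, Matrix (Fin (I n)) (Fin (I n)) ℝ)
    (Y Z : (∀ n, Fin (I n)) → ℝ) :
    innerT (multiT A Y) Z = innerT Y (multiT (fun n => (A n)ᵀ) Z) := by
  simp only [innerT, multiT, Finset.sum_mul, Finset.mul_sum]
  rw [Finset.sum_comm]
  refine Finset.sum_congr rfl fun i _ => Finset.sum_congr rfl fun j _ => ?_
  simp only [Matrix.transpose_apply]
  ring

end SthosvdAux

open SthosvdAux in
/-- Telescoping error decomposition for sequential multilinear projections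
(Theorem 6.5 of Vannieuwenhoven et al.):
`‖X − X̂⁽ᴺ⁾‖_F² = ∑_{n=1}^N ‖X̂⁽ⁿ⁻¹⁾ − X̂⁽ⁿ⁾‖_F²` where
`X̂⁽ⁿ⁾ = X ×₁ P₁ ⋯ ×_n P_n` with `P_j = U⁽ʲ⁾U⁽ʲ⁾ᵀ` orthogonal projections. -/
theorem sthosvd_telescoping {N : ℕ} (I r : Fin N → ℕ)
    (X : (∀ n, Fin (I n)) → ℝ)
    (U : ∀ n, Matrix (Fin (I n)) (Fin (r n)) ℝ)
    (hU : ∀ n, (U n)ᵀ * U n = 1) :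
    frobSqT (X - partialProj (fun n => U n * (U n)ᵀ) X N) =
      ∑ m ∈ Finset.range N,
        frobSqT (partialProj (fun n => U n * (U n)ᵀ) X m -
          partialProj (fun n => U n * (U n)ᵀ) X (m + 1)) := by
  set P : ∀ n, Matrix (Fin (I n)) (Fin (I n)) ℝ := fun n => U n * (U n)ᵀ with hP
  have hPsymm : ∀ n, (P n)ᵀ = P n := by
    intro n; simp [hP, Matrix.transpose_mul]
  have hPidem : ∀ n, P n * P n = P n := by
    intro n
    calc P n * P n = U n * ((U n)ᵀ * U n) * (U n)ᵀ := by
          simp [hP, Matrix.mul_assoc]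
      _ = P n := by rw [hU n]; simp [hP]
  -- inner products between partial projections
  have key : ∀ M K : ℕ, M ≤ K →
      innerT (partialProj P X M) (partialProj P X K) = innerT X (partialProj P X K) := by
    intro M K hMK
    have hfam : (fun (n : Fin N) => ((if (n : ℕ) < M then P n else 1) : Matrix _ _ ℝ)ᵀ *
        (if (n : ℕ) < K then P n else 1)) =
        (fun (n : Fin N) => if (n : ℕ) < K then P n else (1 : Matrix (Fin (I n)) (Fin (I n)) ℝ)) := by
      funext n
      by_cases h1 : (n : ℕ) < M
      · simp [h1, lt_of_lt_of_le h1 hMK, hPsymm, hPidem]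
      · by_cases h2 : (n : ℕ) < K <;> simp [h1, h2]
    simp only [partialProj]
    rw [innerT_multiT, ← multiT_mul, hfam]
  -- generalized statement by induction
  have main : ∀ M : ℕ,
      frobSqT (X - partialProj P X M) =
        ∑ m ∈ Finset.range M,
          frobSqT (partialProj P X m - partialProj P X (m + 1)) := by
    intro M
    induction M with
    | zero =>
      have h0 : partialProj P X 0 = X := by
        rw [partialProj]
        simpa using multiT_one (I := I) X
      simp [h0, frobSqT]
    | succ M ih =>
      have hsplit : X - partialProj P X (M + 1) =
          (X - partialProj P X M) + (partialProj P X M - partialProj P X (M + 1)) := by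
        abel
      have hcross : innerT (X - partialProj P X M)
          (partialProj P X M - partialProj P X (M + 1)) = 0 := by
        rw [innerT_sub_left, innerT_sub_right, innerT_sub_right,
          key M M le_rfl, key M (M + 1) (Nat.le_succ M)]
        ring
      have hexp : frobSqT (X - partialProj P X (M + 1)) =
          frobSqT (X - partialProj P X M) +
            frobSqT (partialProj P X M - partialProj P X (M + 1)) := by
        rw [hsplit]
        set a := X - partialProj P X M
        set b := partialProj P X M - partialProj P X (M + 1)
        have : frobSqT (a + b) = frobSqT a + 2 * innerT a b + frobSqT b := by
          simp only [frobSqT, innerT, Pi.add_apply]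
          rw [Finset.mul_sum, ← Finset.sum_add_distrib, ← Finset.sum_add_distrib]
          refine Finset.sum_congr rfl fun i _ => ?_
          ring
        rw [this, hcross]; ring
      rw [hexp, ih, Finset.sum_range_succ]
  exact main N
end
end

section
/- With X̂^{(n)} as the successive projections of an N-th order tensor X (X̂^{(n)} = X̂^{(n−1)} ×_n P_n, P_n = U^{(n)}U^{(n)ᵀ} an orthogonal projection), each term satisfies ‖X̂^{(n−1)} − X̂^{(n)}‖_F² ≤ ‖X ×_n (I − P_n)‖_F². -/
open Matrix BigOperators

noncomputable section

section Aux
variable {N : ℕ} {I : Fin N → ℕ}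

lemma singleMode_same (n : Fin N) (M : Matrix (Fin (I n)) (Fin (I n)) ℝ) :
    singleMode n M n = M := by
  unfold singleMode
  rw [dif_pos rfl]
  exact cast_eq _ M

lemma singleMode_ne {n m : Fin N} (h : m ≠ n) (M : Matrix (Fin (I n)) (Fin (I n)) ℝ) :
    singleMode n M m = 1 := dif_neg h

lemma multiT_one (X : (∀ n, Fin (I n)) → ℝ) :
    multiT (fun _ => (1 : Matrix _ _ ℝ)) X = X := by
  funext j
  unfold multiT
  have h : ∀ i : ∀ n, Fin (I n), (∏ n, (1 : Matrix (Fin (I n)) (Fin (I n)) ℝ) (j n) (i n))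
      = if j = i then (1:ℝ) else 0 := by
    intro i
    simp only [Matrix.one_apply, Finset.prod_boole]
    simp [funext_iff]
  simp only [h, ite_mul, one_mul, zero_mul]
  simp

lemma multiT_comp (A B : ∀ n, Matrix (Fin (I n)) (Fin (I n)) ℝ)
    (X : (∀ n, Fin (I n)) → ℝ) :
    multiT A (multiT B X) = multiT (fun n => A n * B n) X := by
  funext j
  unfold multiT
  simp only [Finset.mul_sum]
  rw [Finset.sum_comm]
  refine Finset.sum_congr rfl fun k _ => ?_
  have h : ∀ i : ∀ n, Fin (I n),
      (∏ n, A n (j n) (i n)) * ((∏ n, B n (i n) (k n)) * X k)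
        = (∏ n, A n (j n) (i n) * B n (i n) (k n)) * X k := by
    intro i
    rw [Finset.prod_mul_distrib]
    ring
  simp only [h]
  rw [← Finset.sum_mul]
  congr 1
  simp only [Matrix.mul_apply]
  rw [Fintype.prod_sum]

lemma multiT_sub_single (A B C : ∀ n, Matrix (Fin (I n)) (Fin (I n)) ℝ) (m : Fin N)
    (hoffA : ∀ k, k ≠ m → C k = A k) (hoffB : ∀ k, k ≠ m → C k = B k)
    (hm : C m = A m - B m) (X : (∀ n, Fin (I n)) → ℝ) :
    multiT A X - multiT B X = multiT C X := by
  funext j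
  simp only [multiT, Pi.sub_apply, ← Finset.sum_sub_distrib]
  refine Finset.sum_congr rfl fun i _ => ?_
  rw [← sub_mul]
  congr 1
  rw [← Finset.mul_prod_erase Finset.univ (fun p => A p (j p) (i p)) (Finset.mem_univ m),
      ← Finset.mul_prod_erase Finset.univ (fun p => B p (j p) (i p)) (Finset.mem_univ m),
      ← Finset.mul_prod_erase Finset.univ (fun p => C p (j p) (i p)) (Finset.mem_univ m)]
  have hA : (∏ p ∈ Finset.univ.erase m, A p (j p) (i p))
      = ∏ p ∈ Finset.univ.erase m, C p (j p) (i p) :=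
    Finset.prod_congr rfl fun p hp => by
      rw [hoffA p (Finset.mem_erase.mp hp).1]
  have hB : (∏ p ∈ Finset.univ.erase m, B p (j p) (i p))
      = ∏ p ∈ Finset.univ.erase m, C p (j p) (i p) :=
    Finset.prod_congr rfl fun p hp => by
      rw [hoffB p (Finset.mem_erase.mp hp).1]
  rw [hA, hB, hm, ← sub_mul, Matrix.sub_apply]

lemma multiT_singleMode_apply (m : Fin N) (M : Matrix (Fin (I m)) (Fin (I m)) ℝ)
    (X : (∀ n, Fin (I n)) → ℝ) (k : Fin (I m))
    (g : ∀ p : {p : Fin N // p ≠ m}, Fin (I p.1)) :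
    multiT (singleMode m M) X ((Equiv.piSplitAt m (fun n => Fin (I n))).symm (k, g)) =
      ∑ k', M k k' * X ((Equiv.piSplitAt m (fun n => Fin (I n))).symm (k', g)) := by
  set e := Equiv.piSplitAt m (fun n => Fin (I n)) with he
  have hme : ∀ (k : Fin (I m)) g, e.symm (k, g) m = k := by
    intro k g; simp [he, Equiv.piSplitAt_symm_apply]
  have hne : ∀ (k : Fin (I m)) g (p : Fin N) (hp : p ≠ m), e.symm (k, g) p = g ⟨p, hp⟩ := by
    intro k g p hp; simp [he, Equiv.piSplitAt_symm_apply, hp]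
  show (∑ i : ∀ n, Fin (I n),
      (∏ p, singleMode m M p (e.symm (k, g) p) (i p)) * X i) = _
  rw [← Equiv.sum_comp e.symm
    (fun i => (∏ p, singleMode m M p (e.symm (k, g) p) (i p)) * X i), Fintype.sum_prod_type]
  refine Finset.sum_congr rfl fun k' _ => ?_
  have hprod : ∀ g', (∏ p, singleMode m M p (e.symm (k, g) p) (e.symm (k', g') p))
      = M k k' * (if g' = g then 1 else 0) := by
    intro g'
    rw [← Finset.mul_prod_erase Finset.univ
      (fun p => singleMode m M p (e.symm (k, g) p) (e.symm (k', g') p)) (Finset.mem_univ m)]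
    congr 1
    · rw [singleMode_same, hme, hme]
    · rw [Finset.prod_subtype (p := fun p : Fin N => p ≠ m) (F := inferInstance) (Finset.univ.erase m)
        (fun x => by simp) (fun p => singleMode m M p (e.symm (k, g) p) (e.symm (k', g') p))]
      have hq : ∀ q : {p : Fin N // p ≠ m},
          singleMode m M q.1 (e.symm (k, g) q.1) (e.symm (k', g') q.1)
            = if g q = g' q then 1 else 0 := by
        intro q
        rw [singleMode_ne q.2, hne _ _ _ q.2, hne _ _ _ q.2, Matrix.one_apply]
      simp only [hq]
      rw [Finset.prod_boole]
      have hiff : (∀ q ∈ Finset.univ, g q = g' q) ↔ g' = g :=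
        ⟨fun h => funext fun q => (h q (Finset.mem_univ q)).symm,
          fun h q _ => by rw [h]⟩
      simp only [hiff]
  have hsum : ∀ g', (∏ p, singleMode m M p (e.symm (k, g) p) (e.symm (k', g') p))
      * X (e.symm (k', g'))
        = if g' = g then M k k' * X (e.symm (k', g)) else 0 := by
    intro g'
    rw [hprod]
    by_cases h : g' = g <;> simp [h]
  simp only [hsum]
  simp

lemma sum_sq_mulVec_le {a b : ℕ} (U : Matrix (Fin a) (Fin b) ℝ) (hU : Uᵀ * U = 1)
    (x : Fin a → ℝ) : ∑ k, ((U * Uᵀ).mulVec x k) ^ 2 ≤ ∑ k, (x k) ^ 2 := by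
  set P := U * Uᵀ with hPdef
  have hPt : Pᵀ = P := by rw [hPdef, Matrix.transpose_mul, Matrix.transpose_transpose]
  have hP2 : P * P = P := by
    rw [hPdef, Matrix.mul_assoc, ← Matrix.mul_assoc Uᵀ U Uᵀ, hU, Matrix.one_mul]
  have key : P.mulVec x ⬝ᵥ P.mulVec x = P.mulVec x ⬝ᵥ x := by
    conv_lhs => rw [Matrix.dotProduct_mulVec]
    congr 1
    rw [← hPt, Matrix.vecMul_transpose, hPt, Matrix.mulVec_mulVec, hP2]
  simp only [dotProduct] at key
  have key2 : ∑ k, (P.mulVec x k) ^ 2 = ∑ k, P.mulVec x k * x k := by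
    rw [Finset.sum_congr rfl fun k _ => pow_two (P.mulVec x k)]
    exact key
  have hpt : ∀ k : Fin a, (x k - P.mulVec x k) ^ 2
      = x k ^ 2 - 2 * (P.mulVec x k * x k) + (P.mulVec x k) ^ 2 := fun k => by ring
  have h0 : (0:ℝ) ≤ ∑ k, x k ^ 2 - 2 * (∑ k, P.mulVec x k * x k)
      + ∑ k, (P.mulVec x k) ^ 2 := by
    calc (0:ℝ) ≤ ∑ k, (x k - P.mulVec x k) ^ 2 :=
          Finset.sum_nonneg fun k _ => sq_nonneg _
      _ = _ := by
          rw [Finset.sum_congr rfl fun k _ => hpt k, Finset.sum_add_distrib,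
            Finset.sum_sub_distrib, ← Finset.mul_sum]
  linarith [h0, key2]

lemma frobSq_singleMode_le (m : Fin N) (P : Matrix (Fin (I m)) (Fin (I m)) ℝ)
    (hP : ∀ x : Fin (I m) → ℝ, ∑ k, (P.mulVec x k) ^ 2 ≤ ∑ k, (x k) ^ 2)
    (X : (∀ n, Fin (I n)) → ℝ) :
    frobSqT (multiT (singleMode m P) X) ≤ frobSqT X := by
  set e := Equiv.piSplitAt m (fun n => Fin (I n)) with he
  have reindex : ∀ Y : (∀ n, Fin (I n)) → ℝ,
      frobSqT Y = ∑ g, ∑ k, (Y (e.symm (k, g))) ^ 2 := by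
    intro Y
    unfold frobSqT
    rw [← Equiv.sum_comp e.symm (fun j => Y j ^ 2), Fintype.sum_prod_type, Finset.sum_comm]
  rw [reindex, reindex]
  refine Finset.sum_le_sum fun g _ => ?_
  have hv : ∀ k, multiT (singleMode m P) X (e.symm (k, g))
      = P.mulVec (fun k' => X (e.symm (k', g))) k := by
    intro k
    rw [he, multiT_singleMode_apply]
    rfl
  simp only [hv]
  exact hP _

lemma frobSq_multiT_proj_le (P : ∀ n, Matrix (Fin (I n)) (Fin (I n)) ℝ)
    (hP : ∀ n (x : Fin (I n) → ℝ), ∑ k, ((P n).mulVec x k) ^ 2 ≤ ∑ k, (x k) ^ 2)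
    (m : ℕ) (Y : (∀ n, Fin (I n)) → ℝ) :
    frobSqT (multiT (fun k => if (k : ℕ) < m then P k else 1) Y) ≤ frobSqT Y := by
  induction m with
  | zero =>
    simp only [Nat.not_lt_zero, if_false]
    rw [multiT_one]
  | succ m ih =>
    by_cases hm : m < N
    · have heq : (fun k : Fin N => if (k : ℕ) < m + 1 then P k else 1)
          = fun k => singleMode ⟨m, hm⟩ (P ⟨m, hm⟩) k * (if (k : ℕ) < m then P k else 1) := by
        funext k
        by_cases hk : k = ⟨m, hm⟩
        · subst hk
          simp [singleMode_same]
        · rw [singleMode_ne hk, one_mul]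
          have h1 : (k : ℕ) ≠ m := fun h => hk (Fin.ext h)
          have h2 : ((k : ℕ) < m + 1) ↔ ((k : ℕ) < m) := by omega
          simp only [h2]
      rw [heq, ← multiT_comp]
      exact le_trans (frobSq_singleMode_le _ _ (hP _) _) ih
    · have heq : (fun k : Fin N => if (k : ℕ) < m + 1 then P k else 1)
          = fun k : Fin N => if (k : ℕ) < m then P k else 1 := by
        funext k
        have hkN := k.isLt
        have h1 : (k : ℕ) < m := by omega
        rw [if_pos (Nat.lt_succ_of_lt h1), if_pos h1]
      rw [heq]
      exact ih

end Aux

/-- Each telescoping term of the STHOSVD error is bounded by the corresponding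
single-mode projection error:
`‖X̂⁽ⁿ⁻¹⁾ − X̂⁽ⁿ⁾‖_F² ≤ ‖X ×_n (I − P_n)‖_F²`. -/
theorem sthosvd_term_bound {N : ℕ} (I r : Fin N → ℕ)
    (X : (∀ n, Fin (I n)) → ℝ)
    (U : ∀ n, Matrix (Fin (I n)) (Fin (r n)) ℝ)
    (hU : ∀ n, (U n)ᵀ * U n = 1) (n : Fin N) :
    frobSqT (partialProj (fun m => U m * (U m)ᵀ) X n -
        partialProj (fun m => U m * (U m)ᵀ) X (n + 1)) ≤
      frobSqT (multiT (singleMode n (1 - U n * (U n)ᵀ)) X) := by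
  set P : ∀ k, Matrix (Fin (I k)) (Fin (I k)) ℝ := fun k => U k * (U k)ᵀ with hPdef
  have hdiff : partialProj P X n - partialProj P X (n + 1)
      = multiT (fun k => (if (k : ℕ) < (n : ℕ) then P k else 1)
          * singleMode n (1 - P n) k) X := by
    unfold partialProj
    refine multiT_sub_single _ _ _ n ?_ ?_ ?_ X
    · intro k hk
      rw [singleMode_ne hk, mul_one]
    · intro k hk
      rw [singleMode_ne hk, mul_one]
      have h1 : (k : ℕ) ≠ (n : ℕ) := fun h => hk (Fin.ext h)
      have h2 : ((k : ℕ) < (n : ℕ)) ↔ ((k : ℕ) < (n : ℕ) + 1) := by omega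
      simp only [h2]
    · rw [singleMode_same]
      simp
  rw [hdiff, ← multiT_comp]
  exact frobSq_multiT_proj_le P (fun k x => sum_sq_mulVec_le (U k) (hU k) x) n
    (multiT (singleMode n (1 - P n)) X)
end
end

section
/- Suppose for each mode n = 1,…,N we have a bound ‖X ×_n (I − P_n)‖_F² ≤ C_n · Δ_n²(X), where Δ_n²(X) = Σ_{i>r_n} σ_i²(X_{(n)}), P_n = U^{(n)}U^{(n)ᵀ} are orthogonal projections, and C_n ≥ 1 are constants. Then the multilinear projection X̂ = X ×₁ P₁ ⋯ ×_N P_N satisfies ‖X − X̂‖_F² ≤ (Σ_{n=1}^N C_n) · ‖X − X̂_opt‖_F², where X̂_opt is a best multilinear rank-(r₁,…,r_N) approximation of X. -/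
open Matrix BigOperators Finset

noncomputable section

/-- Reassemble a full multi-index from a mode-`n` index and the remaining ones. -/
def mergeIdx {N : ℕ} {I : Fin N → ℕ} (n : Fin N) (i : Fin (I n))
    (rest : ∀ m : {m : Fin N // m ≠ n}, Fin (I m.val)) : ∀ m, Fin (I m) :=
  fun m => if h : m = n then cast (show Fin (I n) = Fin (I m) by rw [h]) i
  else rest ⟨m, h⟩

/-- Mode-`n` matricization (unfolding) of a tensor. -/
def unfold {N : ℕ} {I : Fin N → ℕ} (X : (∀ m, Fin (I m)) → ℝ) (n : Fin N) :
    Matrix (Fin (I n)) (∀ m : {m : Fin N // m ≠ n}, Fin (I m.val)) ℝ :=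
  fun i rest => X (mergeIdx n i rest)

namespace AEB

variable {N : ℕ} {I : Fin N → ℕ}

def inn (X Y : (∀ n, Fin (I n)) → ℝ) : ℝ := ∑ i, X i * Y i

lemma frobSqT_eq_inn (X : (∀ n, Fin (I n)) → ℝ) : frobSqT X = inn X X := by
  simp [frobSqT, inn, sq]

lemma frobSqT_nonneg {ι : Type*} [Fintype ι] (X : ι → ℝ) : 0 ≤ frobSqT X :=
  Finset.sum_nonneg fun _ _ => sq_nonneg _

lemma singleMode_same (n : Fin N) (M : Matrix (Fin (I n)) (Fin (I n)) ℝ) :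
    singleMode n M n = M := by simp [singleMode]

lemma singleMode_ne {n m : Fin N} (h : m ≠ n) (M : Matrix (Fin (I n)) (Fin (I n)) ℝ) :
    singleMode n M m = 1 := by simp [singleMode, h]

lemma singleMode_one (n : Fin N) :
    singleMode (I := I) n 1 = fun _ => 1 := by
  funext m
  by_cases h : m = n
  · subst h; simp [singleMode]
  · simp [singleMode, h]

lemma prod_one_entry (j i : ∀ n, Fin (I n)) :
    (∏ n, (1 : Matrix (Fin (I n)) (Fin (I n)) ℝ) (j n) (i n)) = if j = i then 1 else 0 := by
  by_cases h : j = i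
  · subst h; simp [Matrix.one_apply]
  · obtain ⟨n, hn⟩ := Function.ne_iff.mp h
    rw [if_neg h]
    exact Finset.prod_eq_zero (mem_univ n) (Matrix.one_apply_ne hn)

lemma multiT_one (X : (∀ n, Fin (I n)) → ℝ) :
    multiT (fun _ => (1 : Matrix _ _ ℝ)) X = X := by
  funext j
  simp [multiT, prod_one_entry]

lemma multiT_comp (A B : ∀ n, Matrix (Fin (I n)) (Fin (I n)) ℝ)
    (X : (∀ n, Fin (I n)) → ℝ) :
    multiT A (multiT B X) = multiT (fun n => A n * B n) X := by
  funext j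
  simp only [multiT, Finset.mul_sum]
  rw [Finset.sum_comm]
  refine Finset.sum_congr rfl fun k _ => ?_
  simp only [← mul_assoc]
  rw [← Finset.sum_mul]
  congr 1
  simp only [Matrix.mul_apply, ← Finset.prod_mul_distrib]
  rw [Finset.prod_univ_sum]
  simp

lemma multiT_sub (A : ∀ n, Matrix (Fin (I n)) (Fin (I n)) ℝ)
    (X Y : (∀ n, Fin (I n)) → ℝ) :
    multiT A (X - Y) = multiT A X - multiT A Y := by
  funext j
  simp [multiT, mul_sub, Finset.sum_sub_distrib]

lemma prod_singleMode (a : Fin N) (M : Matrix (Fin (I a)) (Fin (I a)) ℝ)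
    (j i : ∀ n, Fin (I n)) :
    (∏ n, (singleMode a M) n (j n) (i n)) =
      M (j a) (i a) * ∏ n ∈ univ.erase a, (1 : Matrix (Fin (I n)) (Fin (I n)) ℝ) (j n) (i n) := by
  rw [← Finset.mul_prod_erase univ _ (mem_univ a), singleMode_same]
  congr 1
  refine Finset.prod_congr rfl fun m hm => ?_
  rw [singleMode_ne (Finset.mem_erase.mp hm).1]

lemma multiT_single_sub (a : Fin N) (M M' : Matrix (Fin (I a)) (Fin (I a)) ℝ)
    (X : (∀ n, Fin (I n)) → ℝ) :
    multiT (singleMode a (M - M')) X =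
      multiT (singleMode a M) X - multiT (singleMode a M') X := by
  funext j
  simp [multiT, prod_singleMode, Matrix.sub_apply, sub_mul, Finset.sum_sub_distrib]

lemma singleMode_transpose (a : Fin N) (M : Matrix (Fin (I a)) (Fin (I a)) ℝ) :
    (fun n => ((singleMode a M) n)ᵀ) = singleMode a Mᵀ := by
  funext m
  by_cases h : m = a
  · subst h; simp [singleMode_same]
  · simp [singleMode_ne h, Matrix.transpose_one]

lemma singleMode_mul (a : Fin N) (M M' : Matrix (Fin (I a)) (Fin (I a)) ℝ) :
    (fun n => (singleMode a M) n * (singleMode a M') n) = singleMode a (M * M') := by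
  funext m
  by_cases h : m = a
  · subst h; simp [singleMode_same]
  · simp [singleMode_ne h]

lemma multiT_zero_single (a : Fin N) (X : (∀ n, Fin (I n)) → ℝ) :
    multiT (singleMode a (0 : Matrix (Fin (I a)) (Fin (I a)) ℝ)) X = 0 := by
  funext j
  simp [multiT, prod_singleMode]

lemma multiT_adjoint (A : ∀ n, Matrix (Fin (I n)) (Fin (I n)) ℝ)
    (X Y : (∀ n, Fin (I n)) → ℝ) :
    inn (multiT A X) Y = inn X (multiT (fun n => (A n)ᵀ) Y) := by
  simp only [inn, multiT, Finset.sum_mul, Finset.mul_sum]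
  rw [Finset.sum_comm]
  refine Finset.sum_congr rfl fun i _ => Finset.sum_congr rfl fun k _ => ?_
  simp only [Matrix.transpose_apply]
  ring

lemma inn_single_proj (a : Fin N) (P : Matrix (Fin (I a)) (Fin (I a)) ℝ)
    (hsym : Pᵀ = P) (hidem : P * P = P) (Y : (∀ n, Fin (I n)) → ℝ) :
    inn Y (multiT (singleMode a P) Y) = frobSqT (multiT (singleMode a P) Y) := by
  rw [frobSqT_eq_inn, multiT_adjoint, singleMode_transpose, hsym,
    multiT_comp, singleMode_mul, hidem]

lemma sub_proj (a : Fin N) (P : Matrix (Fin (I a)) (Fin (I a)) ℝ)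
    (Y : (∀ n, Fin (I n)) → ℝ) :
    Y - multiT (singleMode a P) Y = multiT (singleMode a (1 - P)) Y := by
  rw [multiT_single_sub, singleMode_one, multiT_one]

lemma contraction (a : Fin N) (P : Matrix (Fin (I a)) (Fin (I a)) ℝ)
    (hsym : Pᵀ = P) (hidem : P * P = P) (Y : (∀ n, Fin (I n)) → ℝ) :
    frobSqT (multiT (singleMode a P) Y) ≤ frobSqT Y := by
  have h1 : inn Y (multiT (singleMode a P) Y) = frobSqT (multiT (singleMode a P) Y) :=
    inn_single_proj a P hsym hidem Y
  have hsym' : (1 - P)ᵀ = 1 - P := by rw [Matrix.transpose_sub, Matrix.transpose_one, hsym]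
  have hidem' : (1 - P) * (1 - P) = 1 - P := by
    simp [Matrix.sub_mul, Matrix.mul_sub, hidem]
  have h2 : inn Y (multiT (singleMode a (1 - P)) Y) =
      frobSqT (multiT (singleMode a (1 - P)) Y) := inn_single_proj a (1 - P) hsym' hidem' Y
  have h3 : inn Y Y - inn Y (multiT (singleMode a P) Y) =
      inn Y (multiT (singleMode a (1 - P)) Y) := by
    rw [← sub_proj]
    simp [inn, mul_sub, Finset.sum_sub_distrib]
  have h4 := frobSqT_nonneg (multiT (singleMode a (1 - P)) Y)
  have := frobSqT_eq_inn Y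
  linarith

lemma cross_zero (a : Fin N) (P : Matrix (Fin (I a)) (Fin (I a)) ℝ)
    (hsym : Pᵀ = P) (hidem : P * P = P) (X W : (∀ n, Fin (I n)) → ℝ) :
    inn (multiT (singleMode a (1 - P)) X) (multiT (singleMode a P) W) = 0 := by
  rw [multiT_adjoint, singleMode_transpose, multiT_comp, singleMode_mul]
  have : (1 - P)ᵀ * P = 0 := by
    rw [Matrix.transpose_sub, Matrix.transpose_one, hsym, Matrix.sub_mul, hidem]
    simp
  rw [this, multiT_zero_single]
  simp [inn]

lemma frobSqT_add_expand (A B : (∀ n, Fin (I n)) → ℝ) :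
    frobSqT (A + B) = frobSqT A + 2 * inn A B + frobSqT B := by
  simp only [frobSqT, inn, Pi.add_apply, Finset.mul_sum, ← Finset.sum_add_distrib]
  refine Finset.sum_congr rfl fun i _ => by ring

lemma key_induction (P : ∀ n, Matrix (Fin (I n)) (Fin (I n)) ℝ)
    (hsym : ∀ n, (P n)ᵀ = P n) (hidem : ∀ n, P n * P n = P n)
    (X : (∀ n, Fin (I n)) → ℝ) (s : Finset (Fin N)) :
    frobSqT (X - multiT (fun k => if k ∈ s then P k else 1) X) ≤
      ∑ n ∈ s, frobSqT (multiT (singleMode n (1 - P n)) X) := by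
  classical
  induction s using Finset.induction_on with
  | empty =>
    simp only [Finset.notMem_empty, if_false, multiT_one, sub_self, Finset.sum_empty]
    simp [frobSqT]
  | @insert a s ha ih =>
    have hfam : (fun k => if k ∈ insert a s then P k else 1) =
        (fun k => (singleMode a (P a)) k * (if k ∈ s then P k else 1)) := by
      funext k
      by_cases h : k = a
      · subst h
        simp [singleMode_same, ha]
      · simp [singleMode_ne h, Finset.mem_insert, h]
    rw [hfam, ← multiT_comp]
    set Z := multiT (fun k => if k ∈ s then P k else 1) X with hZ
    have hdecomp : X - multiT (singleMode a (P a)) Z =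
        multiT (singleMode a (1 - P a)) X + multiT (singleMode a (P a)) (X - Z) := by
      rw [← sub_proj, multiT_sub]
      abel
    rw [hdecomp, frobSqT_add_expand,
      cross_zero a (P a) (hsym a) (hidem a) X (X - Z)]
    have h1 : frobSqT (multiT (singleMode a (P a)) (X - Z)) ≤ frobSqT (X - Z) :=
      contraction a (P a) (hsym a) (hidem a) (X - Z)
    rw [Finset.sum_insert ha]
    linarith [ih]

lemma mergeIdx_splitAt (n : Fin N) (i : Fin (I n))
    (rest : ∀ m : {m : Fin N // m ≠ n}, Fin (I m.val)) :
    mergeIdx n i rest = (Equiv.piSplitAt n (fun m => Fin (I m))).symm (i, rest) := by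
  funext m
  by_cases h : m = n
  · subst h; simp [mergeIdx, Equiv.piSplitAt]
  · simp [mergeIdx, Equiv.piSplitAt, h]

lemma frobSq_unfold (Z : (∀ m, Fin (I m)) → ℝ) (n : Fin N) :
    frobSq (unfold Z n) = frobSqT Z := by
  rw [frobSqT, ← Equiv.sum_comp (Equiv.piSplitAt n (fun m => Fin (I m))).symm
    (fun j => Z j ^ 2)]
  rw [Fintype.sum_prod_type]
  simp [frobSq, unfold, mergeIdx_splitAt]

lemma unfold_sub (X Y : (∀ m, Fin (I m)) → ℝ) (n : Fin N) :
    unfold X n - unfold Y n = unfold (X - Y) n := by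
  funext i rest
  simp [unfold]

end AEB


/-- Abstract error-bound structure of Theorems 1–4 of the paper: if for each mode
`‖X ×_n (I − P_n)‖_F² ≤ C_n Δ_n²(X)` with `C_n ≥ 1`, where `Δ_n²(X)` is the
`(r_n+1)`-th tail energy of `X_{(n)}` (the minimal value of `‖X_{(n)} − Y‖_F²`
over `rank Y ≤ r_n`), then for the multilinear projection
`X̂ = X ×₁ P₁ ⋯ ×_N P_N` and any best multilinear rank-`(r₁,…,r_N)`
approximation `X̂_opt`, `‖X − X̂‖_F² ≤ (∑_n C_n) ‖X − X̂_opt‖_F²`. -/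
theorem abstract_error_bound {N : ℕ} (I r : Fin N → ℕ)
    (X Xopt : (∀ n, Fin (I n)) → ℝ)
    (U : ∀ n, Matrix (Fin (I n)) (Fin (r n)) ℝ)
    (hU : ∀ n, (U n)ᵀ * U n = 1)
    (C Δ : Fin N → ℝ) (hC : ∀ n, 1 ≤ C n)
    (hΔ : ∀ n, IsLeast
      {e : ℝ | ∃ Y : Matrix (Fin (I n)) (∀ m : {m : Fin N // m ≠ n}, Fin (I m.val)) ℝ,
        Y.rank ≤ r n ∧ e = frobSq (unfold X n - Y)} (Δ n))
    (hbound : ∀ n,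
      frobSqT (multiT (singleMode n (1 - U n * (U n)ᵀ)) X) ≤ C n * Δ n)
    (hopt1 : ∀ m, (unfold Xopt m).rank ≤ r m)
    (hopt2 : ∀ Y : (∀ n, Fin (I n)) → ℝ, (∀ m, (unfold Y m).rank ≤ r m) →
      frobSqT (X - Xopt) ≤ frobSqT (X - Y)) :
    frobSqT (X - multiT (fun n => U n * (U n)ᵀ) X) ≤
      (∑ n, C n) * frobSqT (X - Xopt) := by
  classical
  set P : ∀ n, Matrix (Fin (I n)) (Fin (I n)) ℝ := fun n => U n * (U n)ᵀ with hP
  have hsym : ∀ n, (P n)ᵀ = P n := fun n => by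
    simp [hP, Matrix.transpose_mul]
  have hidem : ∀ n, P n * P n = P n := fun n => by
    simp only [hP]
    rw [Matrix.mul_assoc, ← Matrix.mul_assoc (U n)ᵀ, hU n, Matrix.one_mul]
  have hfam : (fun n => U n * (U n)ᵀ) = (fun k => if k ∈ (univ : Finset (Fin N)) then P k else 1) := by
    funext k; simp [hP]
  have hkey := AEB.key_induction P hsym hidem X univ
  rw [← hfam] at hkey
  -- Δ n ≤ frobSqT (X - Xopt)
  have hΔle : ∀ n, Δ n ≤ frobSqT (X - Xopt) := by
    intro n
    have hmem : frobSq (unfold X n - unfold Xopt n) ∈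
        {e : ℝ | ∃ Y, Y.rank ≤ r n ∧ e = frobSq (unfold X n - Y)} :=
      ⟨unfold Xopt n, hopt1 n, rfl⟩
    have := (hΔ n).2 hmem
    rwa [AEB.unfold_sub, AEB.frobSq_unfold] at this
  have hchain : ∀ n, frobSqT (multiT (singleMode n (1 - P n)) X) ≤
      C n * frobSqT (X - Xopt) := by
    intro n
    refine le_trans (hbound n) ?_
    exact mul_le_mul_of_nonneg_left (hΔle n) (le_trans zero_le_one (hC n))
  calc frobSqT (X - multiT (fun n => U n * (U n)ᵀ) X)
      ≤ ∑ n, frobSqT (multiT (singleMode n (1 - P n)) X) := hkey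
    _ ≤ ∑ n, C n * frobSqT (X - Xopt) := Finset.sum_le_sum fun n _ => hchain n
    _ = (∑ n, C n) * frobSqT (X - Xopt) := by rw [Finset.sum_mul]
end
end
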